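/- arXiv:1807.06456 — 6 statements merged into one kernel-verified Lean document; each statement's English description precedes it below -/
import Mathlib

section
/- Let X be a nonnegative random variable with E[X] > 0 and Δ ≥ √(E[X²])/E[X]. Suppose c₁ > 1, c₂ > 0, M > 0 satisfy c₁·E[X] ≤ M ≤ c₂·E[X]. Then √c₁·Δ ≤ √(MΔ²/E[X_{<MΔ²}]) ≤ Δ·√(c₂/(1 − 1/c₁)). -/
open MeasureTheory

theorem truncated_inverse_amplitude_bounds
    {Ω : Type*} [MeasurableSpace Ω] (μ : Measure Ω) [IsProbabilityMeasure μ]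
    (X : Ω → ℝ) (hX : ∀ ω, 0 ≤ X ω)
    (hInt : Integrable X μ) (hInt2 : Integrable (fun ω => X ω ^ 2) μ)
    (hmean : 0 < ∫ ω, X ω ∂μ)
    (Δ : ℝ) (hΔ : Real.sqrt (∫ ω, X ω ^ 2 ∂μ) / (∫ ω, X ω ∂μ) ≤ Δ)
    (c₁ c₂ M : ℝ) (hc₁ : 1 < c₁) (hc₂ : 0 < c₂) (hM : 0 < M)
    (hM₁ : c₁ * ∫ ω, X ω ∂μ ≤ M) (hM₂ : M ≤ c₂ * ∫ ω, X ω ∂μ)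
    (Y : Ω → ℝ) (hY : ∀ ω, Y ω = if X ω < M * Δ ^ 2 then X ω else 0)
    (hIntY : Integrable Y μ) (hYpos : 0 < ∫ ω, Y ω ∂μ) :
    Real.sqrt c₁ * Δ ≤ Real.sqrt ((M * Δ ^ 2) / ∫ ω, Y ω ∂μ) ∧
      Real.sqrt ((M * Δ ^ 2) / ∫ ω, Y ω ∂μ) ≤ Δ * Real.sqrt (c₂ / (1 - 1 / c₁)) := by
  set I := ∫ ω, X ω ∂μ with hIdef
  set I2 := ∫ ω, X ω ^ 2 ∂μ with hI2def
  set J := ∫ ω, Y ω ∂μ with hJdef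
  have hc₁pos : (0:ℝ) < c₁ := lt_trans one_pos hc₁
  have hΔ0 : 0 ≤ Δ := le_trans (div_nonneg (Real.sqrt_nonneg _) hmean.le) hΔ
  have hΔpos : 0 < Δ := by
    rcases hΔ0.lt_or_eq with h | h
    · exact h
    · exfalso
      have hy0 : ∀ ω, Y ω = 0 := by
        intro ω
        rw [hY, ← h]
        simp [not_lt.2 (hX ω)]
      have : J = 0 := by
        rw [hJdef]
        simp [hy0]
      linarith
  have hs : 0 < M * Δ ^ 2 := mul_pos hM (pow_pos hΔpos 2)
  have hYX : ∀ ω, Y ω ≤ X ω := by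
    intro ω
    rw [hY]
    split_ifs
    · exact le_rfl
    · exact hX ω
  have hJI : J ≤ I := integral_mono hIntY hInt hYX
  -- tail bound
  have hsub : ∀ ω, X ω - Y ω ≤ X ω ^ 2 / (M * Δ ^ 2) := by
    intro ω
    rw [hY]
    split_ifs with h
    · simp only [sub_self]
      positivity
    · push_neg at h
      rw [sub_zero, le_div_iff₀ hs]
      nlinarith [hX ω]
  have hdiff : I - J ≤ I2 / (M * Δ ^ 2) := by
    have h := integral_mono (hInt.sub hIntY) (hInt2.div_const _) hsub
    simp only [Pi.sub_apply] at h
    rwa [integral_sub hInt hIntY, integral_div] at h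
  have hI2nn : 0 ≤ I2 := integral_nonneg fun ω => sq_nonneg _
  have hsqrt : Real.sqrt I2 ≤ Δ * I := by
    rw [← div_le_iff₀ hmean]; exact hΔ
  have hI2le : I2 ≤ Δ ^ 2 * I ^ 2 := by
    nlinarith [Real.sq_sqrt hI2nn, Real.sqrt_nonneg I2]
  have hJlb : I * (1 - 1 / c₁) ≤ J := by
    have h2 : I2 / (M * Δ ^ 2) ≤ I / c₁ := by
      rw [div_le_div_iff₀ hs hc₁pos]
      nlinarith [mul_le_mul_of_nonneg_left hM₁ (by positivity : (0:ℝ) ≤ I * Δ ^ 2)]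
    have heq : I * (1 - 1 / c₁) = I - I / c₁ := by ring
    linarith
  have hfrac : 0 < 1 - 1 / c₁ := by
    rw [sub_pos, div_lt_one hc₁pos]; exact hc₁
  constructor
  · have h1 : c₁ * Δ ^ 2 ≤ M * Δ ^ 2 / J := by
      have hA : c₁ * Δ ^ 2 ≤ M * Δ ^ 2 / I := by
        rw [le_div_iff₀ hmean]
        nlinarith [pow_pos hΔpos 2]
      have hB : M * Δ ^ 2 / I ≤ M * Δ ^ 2 / J :=
        div_le_div_of_nonneg_left hs.le hYpos hJI
      linarith
    calc Real.sqrt c₁ * Δ = Real.sqrt (c₁ * Δ ^ 2) := by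
          rw [Real.sqrt_mul hc₁pos.le, Real.sqrt_sq hΔ0]
      _ ≤ Real.sqrt (M * Δ ^ 2 / J) := Real.sqrt_le_sqrt h1
  · have h1 : M * Δ ^ 2 / J ≤ Δ ^ 2 * (c₂ / (1 - 1 / c₁)) := by
      have hnum : M * Δ ^ 2 ≤ c₂ * I * Δ ^ 2 := by
        nlinarith [pow_pos hΔpos 2]
      have hA : M * Δ ^ 2 / J ≤ (c₂ * I * Δ ^ 2) / (I * (1 - 1 / c₁)) :=
        div_le_div₀ (by positivity) hnum (by positivity) hJlb
      have hB : (c₂ * I * Δ ^ 2) / (I * (1 - 1 / c₁)) = Δ ^ 2 * (c₂ / (1 - 1 / c₁)) := by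
        rw [show c₂ * I * Δ ^ 2 = I * (Δ ^ 2 * c₂) by ring,
          mul_div_mul_left _ _ hmean.ne', mul_div_assoc]
      linarith [hA, hB.le]
    calc Real.sqrt (M * Δ ^ 2 / J) ≤ Real.sqrt (Δ ^ 2 * (c₂ / (1 - 1 / c₁))) :=
          Real.sqrt_le_sqrt h1
      _ = Δ * Real.sqrt (c₂ / (1 - 1 / c₁)) := by
          rw [Real.sqrt_mul (sq_nonneg Δ), Real.sqrt_sq hΔ0]
end

section
/- The function x ↦ sin²(tx)/(t²·sin²(x)) is non-increasing on the interval (0, π/t] for any integer t ≥ 2. -/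
/-!
Write `sin (t x)² / (t² sin² x) = (sin (t x) / sin x)² / t²`. On `(0, π/t]` the quotient
`h x = sin (t x) / sin x` is nonnegative, and `h' = φ / sin² x` with
`φ x = t cos (t x) sin x - sin (t x) cos x`. Since `φ (0) = 0` and
`φ' x = (1 - t²) sin (t x) sin x ≤ 0` there, `φ ≤ 0`, so `h` and hence `h²` are antitone.
-/

open Real Set

section

variable {c x : ℝ}

lemma hasDerivAt_sin_const_mul (c x : ℝ) :
    HasDerivAt (fun x => sin (c * x)) (cos (c * x) * c) x := by
  simpa using ((hasDerivAt_id x).const_mul c).sin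

lemma hasDerivAt_cos_const_mul (c x : ℝ) :
    HasDerivAt (fun x => cos (c * x)) (-sin (c * x) * c) x := by
  simpa using ((hasDerivAt_id x).const_mul c).cos

lemma hasDerivAt_mul_cos_mul_sin_sub_sin_mul_cos (c x : ℝ) :
    HasDerivAt (fun x => c * cos (c * x) * sin x - sin (c * x) * cos x)
      ((1 - c ^ 2) * (sin (c * x) * sin x)) x := by
  have := (((hasDerivAt_cos_const_mul c x).const_mul c).mul (hasDerivAt_sin x)).sub
    ((hasDerivAt_sin_const_mul c x).mul (hasDerivAt_cos x))
  exact this.congr_deriv (by ring)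

lemma sin_const_mul_nonneg (hc : 0 < c) (hx : x ∈ Icc 0 (π / c)) : 0 ≤ sin (c * x) :=
  sin_nonneg_of_nonneg_of_le_pi (mul_nonneg hc.le hx.1)
    (by rw [mul_comm, ← le_div_iff₀ hc]; exact hx.2)

lemma mul_cos_mul_mul_sin_le_sin_mul_mul_cos (hc : 1 ≤ c) (hx : x ∈ Icc 0 (π / c)) :
    c * cos (c * x) * sin x ≤ sin (c * x) * cos x := by
  have hc0 : 0 < c := one_pos.trans_le hc
  have hanti : AntitoneOn (fun x => c * cos (c * x) * sin x - sin (c * x) * cos x)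
      (Icc 0 (π / c)) := by
    refine antitoneOn_of_hasDerivWithinAt_nonpos (convex_Icc _ _) (by fun_prop)
      (fun y _ => (hasDerivAt_mul_cos_mul_sin_sub_sin_mul_cos c y).hasDerivWithinAt) ?_
    rw [interior_Icc]
    intro y hy
    have hsin_cy := sin_const_mul_nonneg hc0 (Ioo_subset_Icc_self hy)
    have hsin_y := sin_nonneg_of_nonneg_of_le_pi hy.1.le (hy.2.le.trans (div_le_self pi_pos.le hc))
    have hc2 : 1 - c ^ 2 ≤ 0 := by nlinarith
    exact mul_nonpos_of_nonpos_of_nonneg hc2 (mul_nonneg hsin_cy hsin_y)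
  have := hanti ⟨le_rfl, hx.1.trans hx.2⟩ hx hx.1
  simp only [mul_zero, cos_zero, sin_zero, mul_one, sub_zero] at this
  linarith

lemma sin_pos_of_mem_Ioc_pi_div (hc : 1 < c) (hx : x ∈ Ioc 0 (π / c)) : 0 < sin x :=
  sin_pos_of_pos_of_lt_pi hx.1 (hx.2.trans_lt (div_lt_self pi_pos hc))

lemma antitoneOn_sin_const_mul_div_sin (hc : 1 < c) :
    AntitoneOn (fun x => sin (c * x) / sin x) (Ioc 0 (π / c)) := by
  have hsin : ∀ y ∈ Ioc 0 (π / c), sin y ≠ 0 := fun y hy =>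
    (sin_pos_of_mem_Ioc_pi_div hc hy).ne'
  refine antitoneOn_of_hasDerivWithinAt_nonpos (convex_Ioc _ _)
    (ContinuousOn.div (by fun_prop) (by fun_prop) hsin)
    (fun y hy => ((hasDerivAt_sin_const_mul c y).div (hasDerivAt_sin y)
      (hsin y (interior_subset hy))).hasDerivWithinAt) ?_
  rw [interior_Ioc]
  intro y hy
  have := mul_cos_mul_mul_sin_le_sin_mul_mul_cos hc.le (Ioo_subset_Icc_self hy)
  exact div_nonpos_of_nonpos_of_nonneg (by linarith) (sq_nonneg _)

end

theorem sin_sq_ratio_antitone (t : ℕ) (ht : 2 ≤ t) :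
    AntitoneOn (fun x : ℝ => Real.sin (t * x) ^ 2 / ((t : ℝ) ^ 2 * Real.sin x ^ 2))
      (Set.Ioc 0 (Real.pi / t)) := by
  have hc : (1 : ℝ) < t := by exact_mod_cast ht
  have hsplit : ∀ x : ℝ, sin (t * x) ^ 2 / ((t : ℝ) ^ 2 * sin x ^ 2)
      = (sin (t * x) / sin x) ^ 2 / (t : ℝ) ^ 2 := fun x => by
    rw [div_pow, div_div, mul_comm (sin x ^ 2)]
  intro a ha b hb hab
  have hquot_nonneg : 0 ≤ sin (t * b) / sin b :=
    div_nonneg (sin_const_mul_nonneg (one_pos.trans hc) (Ioc_subset_Icc_self hb))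
      (sin_pos_of_mem_Ioc_pi_div hc hb).le
  simp only [hsplit]
  gcongr ?_ ^ 2 / _
  exact antitoneOn_sin_const_mul_div_sin hc ha hb hab
end

section
/- Let d and d' be probability distributions on a finite set Ω. Then −2·ln(Σ_x √(d(x)·d'(x))) ≤ D(d‖d'), where D(d‖d') = Σ_x d(x)·ln(d(x)/d'(x)) is the KL divergence. Consequently, if T copies of the states |d⟩ = Σ√d(x)|x⟩ and |d'⟩ = Σ√d'(x)|x⟩ can be discriminated with success probability 2/3, then T ≥ ln(9/8)/D(d‖d'). -/
open Finset

theorem neg_two_log_fidelity_le_KL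
    {Ω : Type*} [Fintype Ω] (d d' : Ω → ℝ)
    (hd : ∀ x, 0 ≤ d x) (hd' : ∀ x, 0 ≤ d' x)
    (hsum : ∑ x, d x = 1) (hsum' : ∑ x, d' x = 1)
    (hpos : ∀ x, 0 < d x → 0 < d' x) :
    -2 * Real.log (∑ x, Real.sqrt (d x * d' x)) ≤
      ∑ x ∈ Finset.univ.filter (fun x => 0 < d x), d x * Real.log (d x / d' x) := by
  classical
  set S : Finset Ω := Finset.univ.filter (fun x => 0 < d x) with hS
  have hmemS : ∀ x, x ∈ S ↔ 0 < d x := by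
    intro x; simp [hS]
  have hsumS : ∑ x ∈ S, d x = 1 := by
    rw [← hsum]
    apply Finset.sum_subset (Finset.subset_univ _)
    intro x _ hx
    rcases (hd x).lt_or_eq with h | h
    · exact absurd ((hmemS x).mpr h) hx
    · exact h.symm
  have hjensen := (strictConcaveOn_log_Ioi.concaveOn).le_map_sum
    (t := S) (w := d) (p := fun x => Real.sqrt (d' x / d x))
    (fun i _ => hd i) hsumS
    (by
      intro i hi
      have hdi := (hmemS i).mp hi
      have hd'i := hpos i hdi
      exact Set.mem_Ioi.mpr (Real.sqrt_pos.mpr (div_pos hd'i hdi)))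
  simp only [smul_eq_mul] at hjensen
  have hrw : ∀ x ∈ S, d x * Real.sqrt (d' x / d x) = Real.sqrt (d x * d' x) := by
    intro x hx
    have hdx := (hmemS x).mp hx
    rw [← Real.sqrt_sq hdx.le, ← Real.sqrt_mul (sq_nonneg _)]
    · rw [Real.sqrt_sq hdx.le]
      congr 1
      field_simp
  rw [Finset.sum_congr rfl hrw] at hjensen
  -- S is nonempty, so the partial fidelity sum is positive
  have hSne : S.Nonempty := by
    by_contra h
    rw [Finset.not_nonempty_iff_eq_empty] at h
    rw [h, Finset.sum_empty] at hsumS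
    norm_num at hsumS
  have hposS : 0 < ∑ x ∈ S, Real.sqrt (d x * d' x) := by
    apply Finset.sum_pos
    · intro x hx
      have hdx := (hmemS x).mp hx
      exact Real.sqrt_pos.mpr (mul_pos hdx (hpos x hdx))
    · exact hSne
  have hle : ∑ x ∈ S, Real.sqrt (d x * d' x) ≤ ∑ x, Real.sqrt (d x * d' x) := by
    apply Finset.sum_le_sum_of_subset_of_nonneg (Finset.subset_univ _)
    intro x _ _
    exact Real.sqrt_nonneg _
  have hlog : Real.log (∑ x ∈ S, Real.sqrt (d x * d' x)) ≤
      Real.log (∑ x, Real.sqrt (d x * d' x)) := Real.log_le_log hposS hle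
  have key : ∑ x ∈ S, d x * Real.log (Real.sqrt (d' x / d x)) ≤
      Real.log (∑ x, Real.sqrt (d x * d' x)) := hjensen.trans hlog
  -- rewrite LHS terms
  have hterm : ∀ x ∈ S, d x * Real.log (Real.sqrt (d' x / d x)) =
      -(1/2) * (d x * Real.log (d x / d' x)) := by
    intro x hx
    have hdx := (hmemS x).mp hx
    have hd'x := hpos x hdx
    rw [Real.log_sqrt (div_pos hd'x hdx).le,
      Real.log_div hd'x.ne' hdx.ne', Real.log_div hdx.ne' hd'x.ne']
    ring
  rw [Finset.sum_congr rfl hterm, ← Finset.mul_sum] at key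
  linarith
end

section
/- Let 0 < p < 1 and 0 < α ≤ 1, and set ψ = (1−p)e^{−αp} + p·e^{α(1−p)}. Then 1 + p(1−p)α²/3 ≤ ψ ≤ 1 + p(1−p)α². -/
lemma exp_upper_cubic (t : ℝ) (h0 : 0 ≤ t) (h1 : t ≤ 1) :
    Real.exp t ≤ 1 + t + t ^ 2 / 2 + 2 * t ^ 3 / 9 := by
  have h := Real.exp_bound' h0 h1 (n := 3) (by norm_num)
  have hs : (∑ m ∈ Finset.range 3, t ^ m / m.factorial) = 1 + t + t ^ 2 / 2 := by
    simp [Finset.sum_range_succ, Nat.factorial]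
  rw [hs] at h
  calc Real.exp t ≤ 1 + t + t ^ 2 / 2 + t ^ 3 * (3 + 1) / ((3 : ℕ).factorial * 3) := h
    _ = 1 + t + t ^ 2 / 2 + 2 * t ^ 3 / 9 := by norm_num [Nat.factorial]; ring

lemma exp_le_quad_neg (t : ℝ) (ht0 : 0 ≤ t) (ht1 : t ≤ 1) :
    Real.exp (-t) ≤ 1 + (-t) + (-t) ^ 2 := by
  have hlow : 1 + t + t ^ 2 / 2 ≤ Real.exp t := Real.quadratic_le_exp_of_nonneg ht0
  have hpos : (0:ℝ) < 1 + t + t ^ 2 / 2 := by positivity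
  rw [Real.exp_neg]
  have hinv : (Real.exp t)⁻¹ ≤ (1 + t + t ^ 2 / 2)⁻¹ := inv_anti₀ hpos hlow
  refine hinv.trans ?_
  rw [inv_le_iff_one_le_mul₀ hpos]
  nlinarith [sq_nonneg t, mul_nonneg (mul_nonneg ht0 ht0) ht0,
    mul_nonneg (mul_nonneg (mul_nonneg ht0 ht0) ht0) ht0]

lemma quad_le_exp_neg (t : ℝ) (ht0 : 0 ≤ t) (ht1 : t ≤ 1) :
    1 + (-t) + (-t) ^ 2 / 3 ≤ Real.exp (-t) := by
  have hup := exp_upper_cubic t ht0 ht1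
  have hpos : (0:ℝ) < Real.exp t := Real.exp_pos t
  rw [Real.exp_neg]
  have key : (1 - t + t ^ 2 / 3) * Real.exp t ≤ 1 := by
    have step1 : (1 - t + t ^ 2 / 3) * Real.exp t
        ≤ (1 - t + t ^ 2 / 3) * (1 + t + t ^ 2 / 2 + 2 * t ^ 3 / 9) := by
      rcases le_or_gt 0 (1 - t + t ^ 2 / 3) with hc | hc
      · exact mul_le_mul_of_nonneg_left hup hc
      · nlinarith [sq_nonneg t, sq_nonneg (1 - t)]
    refine step1.trans ?_
    have h1t : 0 ≤ 1 - t := by linarith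
    have ha : 0 ≤ t ^ 2 * (1 - t) := by positivity
    have hb : 0 ≤ t ^ 3 * (1 - t) := by positivity
    have hc : 0 ≤ t ^ 4 * (1 - t) := by positivity
    nlinarith [ha, hb, hc, sq_nonneg t]
  have heq : 1 + (-t) + (-t) ^ 2 / 3 = 1 - t + t ^ 2 / 3 := by ring
  rw [heq]
  calc 1 - t + t ^ 2 / 3 = (1 - t + t ^ 2 / 3) * Real.exp t * (Real.exp t)⁻¹ := by
        field_simp
    _ ≤ 1 * (Real.exp t)⁻¹ := mul_le_mul_of_nonneg_right key (inv_nonneg.2 hpos.le)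
    _ = (Real.exp t)⁻¹ := one_mul _

lemma exp_le_quad (x : ℝ) (h1 : -1 ≤ x) (h2 : x ≤ 1) : Real.exp x ≤ 1 + x + x ^ 2 := by
  rcases le_or_gt 0 x with hx | hx
  · have h := exp_upper_cubic x hx h2
    nlinarith [sq_nonneg x, mul_nonneg (mul_nonneg hx hx) hx]
  · have := exp_le_quad_neg (-x) (by linarith) (by linarith)
    simpa using this

lemma quad_le_exp (x : ℝ) (h1 : -1 ≤ x) (h2 : x ≤ 1) : 1 + x + x ^ 2 / 3 ≤ Real.exp x := by
  rcases le_or_gt 0 x with hx | hx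
  · have h := Real.quadratic_le_exp_of_nonneg hx
    nlinarith [sq_nonneg x]
  · have := quad_le_exp_neg (-x) (by linarith) (by linarith)
    simpa using this

theorem psi_bounds (p α : ℝ) (hp0 : 0 < p) (hp1 : p < 1) (hα0 : 0 < α) (hα1 : α ≤ 1)
    (ψ : ℝ) (hψ : ψ = (1 - p) * Real.exp (-α * p) + p * Real.exp (α * (1 - p))) :
    1 + p * (1 - p) * α ^ 2 / 3 ≤ ψ ∧ ψ ≤ 1 + p * (1 - p) * α ^ 2 := by
  have hx1a : (-1 : ℝ) ≤ -α * p := by nlinarith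
  have hx1b : -α * p ≤ 1 := by nlinarith
  have hx2a : (-1 : ℝ) ≤ α * (1 - p) := by nlinarith
  have hx2b : α * (1 - p) ≤ 1 := by nlinarith
  have hu1 := exp_le_quad _ hx1a hx1b
  have hl1 := quad_le_exp _ hx1a hx1b
  have hu2 := exp_le_quad _ hx2a hx2b
  have hl2 := quad_le_exp _ hx2a hx2b
  constructor
  · rw [hψ]
    nlinarith [mul_le_mul_of_nonneg_left hl1 (by linarith : (0:ℝ) ≤ 1 - p),
      mul_le_mul_of_nonneg_left hl2 hp0.le]
  · rw [hψ]
    nlinarith [mul_le_mul_of_nonneg_left hu1 (by linarith : (0:ℝ) ≤ 1 - p),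
      mul_le_mul_of_nonneg_left hu2 hp0.le]
end

section
/- In any finite simple graph G with m edges, every vertex v satisfies d_v⁺ ≤ √(2m), where d_v⁺ is the number of neighbors w of v with v ≺ w, and ≺ is the total order defined by u ≺ w iff d_u < d_w, or d_u = d_w and u < w (under a fixed linear order on vertices). -/
open Finset

theorem dplus_le_sqrt_two_m
    {V : Type*} [Fintype V] [DecidableEq V] [LinearOrder V]
    (G : SimpleGraph V) [DecidableRel G.Adj] (v : V)
    (prec : V → V → Prop) [DecidableRel prec]
    (hprec : ∀ u w, prec u w ↔
      G.degree u < G.degree w ∨ (G.degree u = G.degree w ∧ u < w)) :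
    (((G.neighborFinset v).filter (fun w => prec v w)).card : ℝ) ≤
      Real.sqrt (2 * G.edgeFinset.card) := by
  set S := (G.neighborFinset v).filter (fun w => prec v w) with hS
  set k := S.card with hk
  have hkdv : k ≤ G.degree v := by
    rw [← G.card_neighborFinset_eq_degree]
    exact card_filter_le _ _
  have hdeg : ∀ w ∈ S, G.degree v ≤ G.degree w := by
    intro w hw
    have := (mem_filter.mp hw).2
    rcases (hprec v w).mp this with h | h
    · exact le_of_lt h
    · exact le_of_eq h.1
  have hsum : k * G.degree v ≤ ∑ w ∈ S, G.degree w := by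
    calc k * G.degree v = ∑ _w ∈ S, G.degree v := by rw [sum_const, smul_eq_mul]
      _ ≤ ∑ w ∈ S, G.degree w := Finset.sum_le_sum hdeg
  have hsum2 : ∑ w ∈ S, G.degree w ≤ ∑ w, G.degree w :=
    Finset.sum_le_sum_of_subset (subset_univ S)
  have h2m : ∑ w, G.degree w = 2 * G.edgeFinset.card := by
    rw [← SimpleGraph.sum_degrees_eq_twice_card_edges]
  have hkk : k * k ≤ 2 * G.edgeFinset.card := by
    calc k * k ≤ k * G.degree v := Nat.mul_le_mul_left k hkdv
      _ ≤ ∑ w ∈ S, G.degree w := hsum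
      _ ≤ ∑ w, G.degree w := hsum2
      _ = 2 * G.edgeFinset.card := h2m
  rw [show ((2 : ℝ) * G.edgeFinset.card) = ((2 * G.edgeFinset.card : ℕ) : ℝ) by push_cast; ring]
  apply Real.le_sqrt_of_sq_le
  have : ((k : ℝ)) ^ 2 = ((k * k : ℕ) : ℝ) := by push_cast; ring
  rw [this]
  exact_mod_cast hkk
end

section
/- Consider the edge estimator: pick v ∈ V uniformly, then pick w uniformly from the neighbors of v (assume all degrees positive); output X = n·d_v if v ≺ w and X = 0 otherwise. Then E[X] = m and E[X²] ≤ 2√2 · n · m^{3/2}. -/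
open Finset

theorem edge_estimator_moments
    {V : Type*} [Fintype V] [DecidableEq V] [LinearOrder V]
    (G : SimpleGraph V) [DecidableRel G.Adj]
    (hdeg : ∀ v : V, 0 < G.degree v)
    (prec : V → V → Prop) [DecidableRel prec]
    (hprec : ∀ u w, prec u w ↔
      G.degree u < G.degree w ∨ (G.degree u = G.degree w ∧ u < w))
    (n m : ℝ) (hn : n = Fintype.card V) (hm : m = G.edgeFinset.card) :
    (1 / n) * ∑ v : V, ∑ w ∈ G.neighborFinset v, (1 / (G.degree v : ℝ)) *
        (if prec v w then n * (G.degree v : ℝ) else 0) = m ∧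
    (1 / n) * ∑ v : V, ∑ w ∈ G.neighborFinset v, (1 / (G.degree v : ℝ)) *
        (if prec v w then n * (G.degree v : ℝ) else 0) ^ 2 ≤
      2 * Real.sqrt 2 * n * m ^ ((3 : ℝ) / 2) := by
  classical
  set D : V → ℕ := fun v => ((G.neighborFinset v).filter (fun w => prec v w)).card with hD
  have hnb : ∀ v : V, G.neighborFinset v = univ.filter (fun w => G.Adj v w) := by
    intro v; ext w; simp
  -- double counting swap
  have h1 : ∀ (q : V → V → Prop) [inst : DecidableRel q],
      ∑ v : V, ((G.neighborFinset v).filter (fun w => q v w)).card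
      = ∑ v : V, ∑ w : V, (if G.Adj v w ∧ q v w then 1 else 0) := by
    intro q _
    refine Finset.sum_congr rfl fun v _ => ?_
    rw [hnb, Finset.filter_filter, Finset.card_filter]
  have hswap : ∑ v : V, ((G.neighborFinset v).filter (fun w => prec w v)).card
      = ∑ v : V, D v := by
    rw [hD, h1 (fun v w => prec w v), h1 (fun v w => prec v w), Finset.sum_comm]
    exact Finset.sum_congr rfl fun x _ => Finset.sum_congr rfl fun y _ =>
      if_congr (and_congr_left' (G.adj_comm y x)) rfl rfl
  have hne : ∀ v w : V, v ≠ w → (¬ prec v w ↔ prec w v) := by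
    intro v w hvw
    rw [hprec, hprec]
    constructor
    · intro h
      push_neg at h
      obtain ⟨h1, h2⟩ := h
      rcases lt_or_eq_of_le h1 with hd|hd
      · exact Or.inl hd
      · exact Or.inr ⟨hd, lt_of_le_of_ne (h2 hd.symm) (Ne.symm hvw)⟩
    · rintro (h | ⟨h, hlt⟩) (h2 | ⟨h2, h2lt⟩)
      · exact absurd h2 h.asymm
      · omega
      · omega
      · exact absurd h2lt hlt.asymm
  have hpart : ∀ v : V, D v + ((G.neighborFinset v).filter (fun w => prec w v)).card
      = G.degree v := by
    intro v
    have hfe : (G.neighborFinset v).filter (fun w => ¬ prec v w)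
        = (G.neighborFinset v).filter (fun w => prec w v) := by
      apply Finset.filter_congr
      intro w hw
      exact hne v w (G.ne_of_adj (by simpa using hw))
    rw [hD, ← SimpleGraph.card_neighborFinset_eq_degree,
      ← Finset.card_filter_add_card_filter_not (s := G.neighborFinset v)
        (p := fun w => prec v w), hfe]
  have hsum : ∑ v : V, D v = G.edgeFinset.card := by
    have h2 : ∑ v : V, D v + ∑ v : V, ((G.neighborFinset v).filter (fun w => prec w v)).card
        = 2 * G.edgeFinset.card := by
      rw [← Finset.sum_add_distrib, Finset.sum_congr rfl fun v _ => hpart v]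
      exact SimpleGraph.sum_degrees_eq_twice_card_edges G
    rw [hswap] at h2
    omega
  have hDd : ∀ v : V, D v ≤ G.degree v := by
    intro v
    rw [hD, ← SimpleGraph.card_neighborFinset_eq_degree]
    exact Finset.card_filter_le _ _
  have hB : ∀ v : V, D v * G.degree v ≤ 2 * G.edgeFinset.card := by
    intro v
    have h1 : ∀ w ∈ (G.neighborFinset v).filter (fun w => prec v w),
        G.degree v ≤ G.degree w := by
      intro w hw
      rcases (hprec v w).mp (Finset.mem_filter.mp hw).2 with h|⟨h,_⟩
      · exact h.le
      · exact h.le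
    calc D v * G.degree v
        ≤ ∑ w ∈ (G.neighborFinset v).filter (fun w => prec v w), G.degree w := by
          simpa [mul_comm] using Finset.card_nsmul_le_sum _ _ _ h1
      _ ≤ ∑ w : V, G.degree w :=
          Finset.sum_le_sum_of_subset ((Finset.filter_subset _ _).trans
            ((G.neighborFinset v).subset_univ))
      _ = 2 * G.edgeFinset.card := SimpleGraph.sum_degrees_eq_twice_card_edges G
  have hinner : ∀ (c : ℝ) (v : V),
      ∑ w ∈ G.neighborFinset v, (1 / (G.degree v : ℝ)) * (if prec v w then c else 0)
      = (D v : ℝ) * ((1 / (G.degree v : ℝ)) * c) := by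
    intro c v
    simp only [mul_ite, mul_zero]
    rw [← Finset.sum_filter, Finset.sum_const, nsmul_eq_mul]
  rcases isEmpty_or_nonempty V with hV | hV
  · have hc0 : 2 * G.edgeFinset.card = 0 := by
      rw [← SimpleGraph.sum_degrees_eq_twice_card_edges]; simp
    have hm0 : m = 0 := by
      rw [hm]
      norm_cast
      omega
    constructor
    · simp [hm0]
    · simp [hm0, Real.zero_rpow (by norm_num : ((3:ℝ)/2) ≠ 0)]
  · have hn0 : (0:ℝ) < n := by
      rw [hn]; exact_mod_cast Fintype.card_pos
    have hmpos : 0 < G.edgeFinset.card := by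
      have h := SimpleGraph.sum_degrees_eq_twice_card_edges G
      have hv := hdeg (Classical.arbitrary V)
      have h2 : G.degree (Classical.arbitrary V) ≤ ∑ v : V, G.degree v :=
        Finset.single_le_sum (f := fun v => G.degree v)
          (fun _ _ => Nat.zero_le _) (Finset.mem_univ _)
      omega
    have hm0 : (0:ℝ) < m := by rw [hm]; exact_mod_cast hmpos
    have hdvne : ∀ v : V, (G.degree v : ℝ) ≠ 0 := by
      intro v
      exact_mod_cast (hdeg v).ne'
    have hdegsum : ∑ v : V, (G.degree v : ℝ) = 2 * m := by
      rw [hm, ← Nat.cast_sum]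
      norm_cast
      exact SimpleGraph.sum_degrees_eq_twice_card_edges G
    have hDsum : (∑ v : V, (D v : ℝ)) = m := by
      rw [hm, ← hsum]
      push_cast
      ring
    constructor
    · rw [Finset.sum_congr rfl fun v _ => hinner (n * (G.degree v : ℝ)) v]
      have hd : ∀ v : V, (D v : ℝ) * ((1/(G.degree v:ℝ)) * (n * G.degree v)) = (D v : ℝ) * n := by
        intro v
        have h := hdvne v
        field_simp
      rw [Finset.sum_congr rfl fun v _ => hd v, ← Finset.sum_mul, hDsum]
      field_simp
    · simp only [apply_ite (fun x : ℝ => x ^ 2), ne_eq, OfNat.ofNat_ne_zero,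
        not_false_eq_true, zero_pow]
      rw [Finset.sum_congr rfl fun v _ => hinner ((n * (G.degree v : ℝ)) ^ 2) v]
      have hd2 : ∀ v : V, (D v : ℝ) * ((1/(G.degree v:ℝ)) * (n * G.degree v)^2)
          = (D v : ℝ) * (n^2 * G.degree v) := by
        intro v
        have h := hdvne v
        field_simp
        try ring
      rw [Finset.sum_congr rfl fun v _ => hd2 v]
      have hDm : ∀ v : V, (D v : ℝ) ≤ Real.sqrt (2 * m) := by
        intro v
        have h1 : (D v:ℝ)^2 ≤ 2*m := by
          have h2 : D v * D v ≤ 2 * G.edgeFinset.card :=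
            le_trans (Nat.mul_le_mul_left _ (hDd v)) (hB v)
          rw [hm]
          have h3 : ((D v * D v : ℕ) : ℝ) ≤ ((2 * G.edgeFinset.card : ℕ) : ℝ) := by
            exact_mod_cast h2
          push_cast at h3
          nlinarith [h3]
        calc (D v:ℝ) = Real.sqrt ((D v:ℝ)^2) := (Real.sqrt_sq (by positivity)).symm
          _ ≤ Real.sqrt (2*m) := Real.sqrt_le_sqrt h1
      have hsum2 : ∑ v : V, (D v:ℝ) * (n^2 * G.degree v)
          ≤ n^2 * (Real.sqrt (2*m) * (2*m)) := by
        calc ∑ v : V, (D v:ℝ) * (n^2 * G.degree v)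
            ≤ ∑ v : V, Real.sqrt (2*m) * (n^2 * G.degree v) :=
              Finset.sum_le_sum fun v _ =>
                mul_le_mul_of_nonneg_right (hDm v) (by positivity)
          _ = n^2 * (Real.sqrt (2*m) * (2*m)) := by
              rw [← Finset.mul_sum]
              have : ∑ v : V, n^2 * (G.degree v : ℝ) = n^2 * (2*m) := by
                rw [← Finset.mul_sum, hdegsum]
              rw [this]
              ring
      have hrpow : m ^ ((3:ℝ)/2) = m * Real.sqrt m := by
        rw [Real.sqrt_eq_rpow, show (3:ℝ)/2 = 1 + 1/2 by norm_num,
          Real.rpow_add hm0, Real.rpow_one]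
      calc (1/n) * ∑ v : V, (D v:ℝ) * (n^2 * G.degree v)
          ≤ (1/n) * (n^2 * (Real.sqrt (2*m) * (2*m))) :=
            mul_le_mul_of_nonneg_left hsum2 (by positivity)
        _ = 2 * Real.sqrt 2 * n * m ^ ((3:ℝ)/2) := by
            rw [hrpow, Real.sqrt_mul (by norm_num : (0:ℝ) ≤ 2)]
            field_simp
end
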